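/- For every band-limited exponential sum f(x) = Σₙ₌₁^M cₙe^{iωₙx} with |ωₙ| ≤ Ω, the L² and L^∞ norms on [0,1] are equivalent: ‖f‖_{L²[0,1]} ≤ ‖f‖_{L^∞[0,1]} ≤ 2·(2(1+Ω))^{M(M+1)/2}·‖f‖_{L²[0,1]}. -/

import Mathlib

/-!
The key is a Bernstein-type inequality: if `f` is a sum of `M` exponentials with frequencies in
`[-Ω, Ω]`, then `sup |f'| ≤ B_M · sup |f|` on `[0, 1]`. It is proved by induction on `M`: taking out
one frequency `ω_j`, the function `g = f' - i ω_j f` is an exponential sum with `M - 1` terms and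
`(e^{-i ω_j t} f)' = e^{-i ω_j t} g`. By induction `g` varies slowly, so on a short interval
around a maximum point of `|g|` the function `e^{-i ω_j t} g` is almost constant, and its integral
there, which is at most `2 sup |f|`, controls `sup |g|`.

With the derivative bound, `|f| ≥ sup |f| / 2` on an interval of length `≈ 1 / B_M` next to a
maximum point of `|f|`, so `sup |f|² ≲ B_M ∫₀¹ |f|²`.
-/

open Complex Set

lemma exists_Icc_add_subset_Icc_mem {u v δ t₀ : ℝ} (hδ : 0 ≤ δ) (hδv : δ ≤ v - u)
    (ht₀ : t₀ ∈ Icc u v) : ∃ a, Icc a (a + δ) ⊆ Icc u v ∧ t₀ ∈ Icc a (a + δ) := by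
  refine ⟨min t₀ (v - δ), Icc_subset_Icc ?_ ?_, min_le_left _ _, ?_⟩
  · exact le_min ht₀.1 (by linarith)
  · linarith [min_le_right t₀ (v - δ)]
  · rcases le_total t₀ (v - δ) with h | h
    · rw [min_eq_left h]; linarith
    · rw [min_eq_right h]; linarith [ht₀.2]

lemma sqrt_integral_sq_le_of_norm_le {E : Type*} [NormedAddCommGroup E] {F : ℝ → E} {S : ℝ}
    (hS0 : 0 ≤ S) (hS : ∀ t ∈ Icc (0 : ℝ) 1, ‖F t‖ ≤ S) :
    √(∫ t in (0 : ℝ)..1, ‖F t‖ ^ 2) ≤ S := by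
  refine Real.sqrt_le_iff.2 ⟨hS0, ?_⟩
  have := intervalIntegral.norm_integral_le_of_norm_le_const (a := 0) (b := 1)
    (f := fun t => ‖F t‖ ^ 2) (C := S ^ 2) fun t ht => by
      rw [uIoc_of_le zero_le_one] at ht
      rw [Real.norm_eq_abs, abs_of_nonneg (by positivity)]
      exact pow_le_pow_left₀ (norm_nonneg _) (hS t (Ioc_subset_Icc_self ht)) 2
  simp only [sub_zero, abs_one, mul_one, Real.norm_eq_abs] at this
  exact (le_abs_self _).trans this

section Derivative

variable {E : Type*} [NormedAddCommGroup E] [NormedSpace ℝ E]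

lemma exists_Icc_add_norm_sub_le {F F' : ℝ → E} {u v δ C t₀ : ℝ}
    (hF : ∀ t, HasDerivAt F (F' t) t) (hF' : ∀ t ∈ Icc u v, ‖F' t‖ ≤ C)
    (hδ : 0 ≤ δ) (hδv : δ ≤ v - u) (ht₀ : t₀ ∈ Icc u v) :
    ∃ a, Icc a (a + δ) ⊆ Icc u v ∧ ∀ t ∈ Icc a (a + δ), ‖F t - F t₀‖ ≤ C * δ := by
  obtain ⟨a, hsub, hat₀⟩ := exists_Icc_add_subset_Icc_mem hδ hδv ht₀
  refine ⟨a, hsub, fun t ht => ?_⟩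
  have hC : 0 ≤ C := (norm_nonneg _).trans (hF' t₀ ht₀)
  have hdist : ‖t - t₀‖ ≤ δ := by
    rw [Real.norm_eq_abs, abs_le]; constructor <;> linarith [ht.1, ht.2, hat₀.1, hat₀.2]
  calc ‖F t - F t₀‖ ≤ C * ‖t - t₀‖ :=
        (convex_Icc u v).norm_image_sub_le_of_norm_hasDerivWithin_le
          (fun x _ => (hF x).hasDerivWithinAt) hF' ht₀ (hsub ht)
    _ ≤ C * δ := mul_le_mul_of_nonneg_left hdist hC

lemma sq_norm_le_mul_integral_of_norm_deriv_le {F F' : ℝ → E} {L t₀ : ℝ}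
    (hF : ∀ t, HasDerivAt F (F' t) t) (hF' : ∀ t ∈ Icc (0 : ℝ) 1, ‖F' t‖ ≤ L * ‖F t₀‖)
    (ht₀ : t₀ ∈ Icc (0 : ℝ) 1) :
    ‖F t₀‖ ^ 2 ≤ 4 * max (2 * L) 1 * ∫ t in (0 : ℝ)..1, ‖F t‖ ^ 2 := by
  set S := ‖F t₀‖
  set D := max (2 * L) 1
  have hD : 1 ≤ D := le_max_right _ _
  have hδ : 0 ≤ D⁻¹ := inv_nonneg.2 (by linarith)
  have hLδ : L * D⁻¹ ≤ 1 / 2 := by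
    rw [← div_eq_mul_inv, div_le_iff₀ (by positivity)]; linarith [le_max_left (2 * L) 1]
  obtain ⟨a, hsub, hclose⟩ := exists_Icc_add_norm_sub_le hF hF' hδ
    (by simpa using inv_le_one_of_one_le₀ hD) ht₀
  have hcont : Continuous fun t => ‖F t‖ ^ 2 :=
    (continuous_iff_continuousAt.2 fun t => (hF t).continuousAt).norm.pow 2
  have hlarge : ∀ t ∈ Icc a (a + D⁻¹), S / 2 ≤ ‖F t‖ := fun t ht => by
    have h1 := hclose t ht
    have h2 := norm_sub_norm_le (F t₀) (F t)
    rw [norm_sub_rev] at h2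
    nlinarith [norm_nonneg (F t₀)]
  calc S ^ 2 = 4 * D * (D⁻¹ * (S / 2) ^ 2) := by field_simp; ring
    _ ≤ 4 * D * ∫ t in a..a + D⁻¹, ‖F t‖ ^ 2 := by
        gcongr
        have := intervalIntegral.integral_mono_on (μ := MeasureTheory.volume)
          (le_add_of_nonneg_right hδ)
          intervalIntegrable_const (hcont.intervalIntegrable _ _)
          fun t ht => pow_le_pow_left₀ (by positivity) (hlarge t ht) 2
        simpa using this
    _ ≤ 4 * D * ∫ t in (0 : ℝ)..1, ‖F t‖ ^ 2 := by
        gcongr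
        exact intervalIntegral.integral_mono_interval (hsub ⟨le_rfl, le_add_of_nonneg_right hδ⟩).1
          (le_add_of_nonneg_right hδ) (hsub ⟨le_add_of_nonneg_right hδ, le_rfl⟩).2
          (Filter.Eventually.of_forall fun t => by positivity) (hcont.intervalIntegrable _ _)

/-- On a subinterval `[a, a + δ]` of `[0, 1]` containing `t₀`, with `δ = 1 / (2 (K + 1))`, `G` stays
within `‖G t₀‖ / 2` of `G t₀`, so `h (a + δ) - h a = ∫ G` has norm at least `δ ‖G t₀‖ / 2`. -/
lemma norm_le_of_hasDerivAt_of_norm_deriv_le [CompleteSpace E] {h G G' : ℝ → E} {K S t₀ : ℝ}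
    (hK : 0 ≤ K) (hh : ∀ t, HasDerivAt h (G t) t) (hG : ∀ t, HasDerivAt G (G' t) t)
    (hG' : ∀ t ∈ Icc (0 : ℝ) 1, ‖G' t‖ ≤ K * ‖G t₀‖) (hS : ∀ t ∈ Icc (0 : ℝ) 1, ‖h t‖ ≤ S)
    (ht₀ : t₀ ∈ Icc (0 : ℝ) 1) : ‖G t₀‖ ≤ 8 * (K + 1) * S := by
  set δ := (2 * (K + 1))⁻¹
  have hδ : 0 < δ := by positivity
  have hKδ : K * δ ≤ 1 / 2 := by
    rw [← div_eq_mul_inv, div_le_iff₀ (by positivity)]; linarith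
  obtain ⟨a, hsub, hclose⟩ := exists_Icc_add_norm_sub_le hG hG' hδ.le
    (by simp only [sub_zero]; exact inv_le_one_of_one_le₀ (by linarith)) ht₀
  have hab : a ≤ a + δ := le_add_of_nonneg_right hδ.le
  have hGint : IntervalIntegrable G MeasureTheory.volume a (a + δ) :=
    (continuous_iff_continuousAt.2 fun t => (hG t).continuousAt).intervalIntegrable _ _
  have hftc : ∫ t in a..a + δ, G t = h (a + δ) - h a :=
    intervalIntegral.integral_eq_sub_of_hasDerivAt (fun t _ => hh t) hGint
  have hdev : ‖δ • G t₀ - (h (a + δ) - h a)‖ ≤ ‖G t₀‖ / 2 * δ := by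
    have hconst : ∫ _ in a..a + δ, G t₀ = δ • G t₀ := by simp
    rw [← hftc, ← hconst, ← intervalIntegral.integral_sub intervalIntegrable_const hGint]
    have := intervalIntegral.norm_integral_le_of_norm_le_const (C := ‖G t₀‖ / 2)
      (f := fun t => G t₀ - G t) fun t ht => by
        rw [uIoc_of_le hab] at ht
        rw [norm_sub_rev]
        nlinarith [hclose t (Ioc_subset_Icc_self ht), norm_nonneg (G t₀)]
    simpa [abs_of_pos hδ] using this
  have hend : ‖h (a + δ) - h a‖ ≤ 2 * S :=
    (norm_sub_le _ _).trans (by linarith [hS _ (hsub ⟨hab, le_rfl⟩), hS _ (hsub ⟨le_rfl, hab⟩)])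
  have hbalance : δ * ‖G t₀‖ ≤ ‖G t₀‖ / 2 * δ + 2 * S := by
    calc δ * ‖G t₀‖ = ‖δ • G t₀‖ := by rw [norm_smul, Real.norm_of_nonneg hδ.le]
      _ ≤ ‖δ • G t₀ - (h (a + δ) - h a)‖ + ‖h (a + δ) - h a‖ := norm_le_norm_sub_add _ _
      _ ≤ _ := add_le_add hdev hend
  calc ‖G t₀‖ = 2 * (δ⁻¹ * (δ * ‖G t₀‖ / 2)) := by field_simp
    _ ≤ 2 * (δ⁻¹ * (2 * S)) := by gcongr; linarith
    _ = 8 * (K + 1) * S := by simp only [δ, inv_inv]; ring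

end Derivative

lemma norm_exp_I_mul_ofReal_mul (a x : ℝ) : ‖exp (I * a * x)‖ = 1 := by
  rw [mul_assoc, ← ofReal_mul]; exact norm_exp_I_mul_ofReal _

lemma hasDerivAt_exp_I_mul_ofReal_mul (a x : ℝ) :
    HasDerivAt (fun t : ℝ => exp (I * a * t)) (I * a * exp (I * a * x)) x := by
  have := ((hasDerivAt_id (x : ℂ)).const_mul (I * a)).cexp.comp_ofReal
  simpa [mul_comm] using this

lemma norm_le_of_hasDerivAt_eq_add_I_mul {f g g' : ℝ → ℂ} {a Ω L S t₀ : ℝ} (ha : |a| ≤ Ω)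
    (hL : 0 ≤ L) (hf : ∀ t, HasDerivAt f (g t + I * a * f t) t)
    (hg : ∀ t, HasDerivAt g (g' t) t) (hg' : ∀ t ∈ Icc (0 : ℝ) 1, ‖g' t‖ ≤ L * ‖g t₀‖)
    (hmax : ∀ t ∈ Icc (0 : ℝ) 1, ‖g t‖ ≤ ‖g t₀‖) (hS : ∀ t ∈ Icc (0 : ℝ) 1, ‖f t‖ ≤ S)
    (ht₀ : t₀ ∈ Icc (0 : ℝ) 1) : ‖g t₀‖ ≤ 8 * (L + Ω + 1) * S := by
  -- `(e f)' = e g` and `|e| = 1` for `e t = exp (-i a t)`.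
  set e : ℝ → ℂ := fun t => exp (I * ↑(-a) * t)
  have he t : HasDerivAt e (I * ↑(-a) * e t) t := hasDerivAt_exp_I_mul_ofReal_mul (-a) t
  have hne t : ‖e t‖ = 1 := norm_exp_I_mul_ofReal_mul (-a) t
  have hmod := norm_le_of_hasDerivAt_of_norm_deriv_le (h := fun t => e t * f t)
    (G := fun t => e t * g t) (G' := fun t => e t * (g' t - I * a * g t)) (K := L + Ω)
    (by linarith [abs_nonneg a])
    (fun t => ((he t).mul (hf t)).congr_deriv (by push_cast; ring))
    (fun t => ((he t).mul (hg t)).congr_deriv (by push_cast; ring))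
    (fun t ht => by
      simp only [norm_mul, hne, one_mul]
      calc ‖g' t - I * a * g t‖ ≤ ‖g' t‖ + |a| * ‖g t‖ := by
            simpa using norm_sub_le (g' t) (I * a * g t)
        _ ≤ L * ‖g t₀‖ + Ω * ‖g t₀‖ :=
            add_le_add (hg' t ht)
              (mul_le_mul ha (hmax t ht) (norm_nonneg _) ((abs_nonneg a).trans ha))
        _ = (L + Ω) * ‖g t₀‖ := by ring)
    (fun t ht => by simpa only [norm_mul, hne, one_mul] using hS t ht) ht₀
  simpa only [norm_mul, hne, one_mul, add_assoc] using hmod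

section ExpSum

variable {ι : Type*}

noncomputable def expSum (s : Finset ι) (c : ι → ℂ) (ω : ι → ℝ) (x : ℝ) : ℂ :=
  ∑ k ∈ s, c k * exp (I * ω k * x)

lemma hasDerivAt_expSum (s : Finset ι) (c : ι → ℂ) (ω : ι → ℝ) (x : ℝ) :
    HasDerivAt (expSum s c ω) (expSum s (fun k => I * ω k * c k) ω x) x := by
  have := HasDerivAt.fun_sum (u := s)
    fun k _ => (hasDerivAt_exp_I_mul_ofReal_mul (ω k) x).const_mul (c k)
  exact this.congr_deriv (Finset.sum_congr rfl fun k _ => by ring)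

lemma continuous_expSum (s : Finset ι) (c : ι → ℂ) (ω : ι → ℝ) : Continuous (expSum s c ω) :=
  continuous_iff_continuousAt.2 fun x => (hasDerivAt_expSum s c ω x).continuousAt

lemma expSum_insert_deriv_coeff [DecidableEq ι] (s : Finset ι) (j : ι) (c : ι → ℂ)
    (ω : ι → ℝ) (x : ℝ) :
    expSum (insert j s) (fun k => I * ω k * c k) ω x =
      expSum s (fun k => I * (ω k - ω j) * c k) ω x + I * ω j * expSum (insert j s) c ω x := by
  have hj : expSum (insert j s) (fun k => I * (ω k - ω j) * c k) ω x =
      expSum s (fun k => I * (ω k - ω j) * c k) ω x :=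
    Finset.sum_insert_zero (by simp)
  rw [← hj]
  simp only [expSum, Finset.mul_sum, ← Finset.sum_add_distrib]
  exact Finset.sum_congr rfl fun k _ => by ring

/-- From `f' = g + i ω_j f`: `sup |f'| ≤ sup |g| + Ω sup |f|`, with `sup |g|` bounded by
`norm_le_of_hasDerivAt_eq_add_I_mul`; for a single exponential `g = 0`. -/
def bernsteinConst (Ω : ℝ) : ℕ → ℝ
  | 0 => 0
  | 1 => Ω
  | n + 2 => 8 * (bernsteinConst Ω (n + 1) + Ω + 1) + Ω

lemma bernsteinConst_nonneg {Ω : ℝ} (hΩ : 0 ≤ Ω) : ∀ n, 0 ≤ bernsteinConst Ω n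
  | 0 => le_rfl
  | 1 => hΩ
  | n + 2 => by
    have := bernsteinConst_nonneg hΩ (n + 1)
    simp only [bernsteinConst]; positivity

theorem norm_expSum_deriv_le {Ω S : ℝ} (s : Finset ι) {c : ι → ℂ} {ω : ι → ℝ}
    (hω : ∀ k ∈ s, |ω k| ≤ Ω) (hS : ∀ x ∈ Icc (0 : ℝ) 1, ‖expSum s c ω x‖ ≤ S) {x : ℝ}
    (hx : x ∈ Icc (0 : ℝ) 1) :
    ‖expSum s (fun k => I * ω k * c k) ω x‖ ≤ bernsteinConst Ω s.card * S := by
  classical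
  induction s using Finset.induction_on generalizing c S x with
  | empty => simp [expSum, bernsteinConst]
  | @insert j s hj ih =>
    have hωj := hω j (Finset.mem_insert_self j s)
    have hΩ : 0 ≤ Ω := (abs_nonneg _).trans hωj
    set g := expSum s (fun k => I * (ω k - ω j) * c k) ω
    have hlast : ‖I * ω j * expSum (insert j s) c ω x‖ ≤ Ω * S := by
      simpa using mul_le_mul hωj (hS x hx) (norm_nonneg _) hΩ
    rw [expSum_insert_deriv_coeff, Finset.card_insert_of_notMem hj]
    rcases s.eq_empty_or_nonempty with rfl | hs
    · simpa [g, expSum, bernsteinConst] using hlast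
    obtain ⟨n, hn⟩ : ∃ n, s.card = n + 1 := ⟨s.card - 1, by have := hs.card_pos; omega⟩
    obtain ⟨t₀, ht₀, hmax⟩ := isCompact_Icc.exists_isMaxOn (nonempty_Icc.2 zero_le_one)
      (continuous_expSum s _ ω).norm.continuousOn
    have hg : ‖g t₀‖ ≤ 8 * (bernsteinConst Ω (n + 1) + Ω + 1) * S :=
      norm_le_of_hasDerivAt_eq_add_I_mul hωj (bernsteinConst_nonneg hΩ _)
        (fun t => (hasDerivAt_expSum _ c ω t).congr_deriv (expSum_insert_deriv_coeff s j c ω t))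
        (hasDerivAt_expSum s _ ω)
        (fun t ht => hn ▸ ih (fun k hk => hω k (Finset.mem_insert_of_mem hk)) hmax ht)
        hmax hS ht₀
    rw [hn]
    calc ‖g x + I * ω j * expSum (insert j s) c ω x‖ ≤ ‖g t₀‖ + Ω * S :=
          (norm_add_le _ _).trans (add_le_add (hmax hx) hlast)
      _ ≤ 8 * (bernsteinConst Ω (n + 1) + Ω + 1) * S + Ω * S := by gcongr
      _ = bernsteinConst Ω (n + 1 + 1) * S := by simp only [bernsteinConst]; ring

lemma two_mul_bernsteinConst_le {Ω : ℝ} (hΩ : 0 ≤ Ω) :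
    ∀ n, 2 * bernsteinConst Ω n ≤ (2 * (1 + Ω)) ^ (n * (n + 1))
  | 0 => by simp [bernsteinConst]
  | 1 => by norm_num [bernsteinConst]; nlinarith
  | n + 2 => by
    have ih := two_mul_bernsteinConst_le hΩ (n + 1)
    set q := 2 * (1 + Ω)
    have hq : 2 ≤ q := by linarith
    have hQ : q ^ 2 ≤ q ^ ((n + 1) * (n + 1 + 1)) :=
      pow_le_pow_right₀ (by linarith) (by nlinarith)
    have h16 : 16 ≤ q ^ (2 * (n + 2)) :=
      calc (16 : ℝ) = 2 ^ 4 := by norm_num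
        _ ≤ q ^ 4 := pow_le_pow_left₀ (by norm_num) hq 4
        _ ≤ q ^ (2 * (n + 2)) := pow_le_pow_right₀ (by linarith) (by omega)
    have hsplit :
        q ^ ((n + 2) * (n + 2 + 1)) = q ^ ((n + 1) * (n + 1 + 1)) * q ^ (2 * (n + 2)) := by
      rw [← pow_add]; congr 1; ring
    rw [hsplit]
    simp only [bernsteinConst]
    nlinarith

end ExpSum

theorem norm_equivalence_band_limited
    (M : ℕ) (Ω : ℝ) (hΩ : 0 ≤ Ω) (c : Fin M → ℂ) (ω : Fin M → ℝ)
    (hω : ∀ k, |ω k| ≤ Ω)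
    (f : ℝ → ℂ)
    (hf : ∀ x : ℝ, f x = ∑ k, c k * Complex.exp (Complex.I * (ω k : ℂ) * (x : ℂ))) :
    Real.sqrt (∫ x in (0 : ℝ)..1, ‖f x‖ ^ 2)
      ≤ sSup ((fun y => ‖f y‖) '' Set.Icc (0 : ℝ) 1) ∧
    sSup ((fun y => ‖f y‖) '' Set.Icc (0 : ℝ) 1)
      ≤ 2 * (2 * (1 + Ω)) ^ (M * (M + 1) / 2) *
          Real.sqrt (∫ x in (0 : ℝ)..1, ‖f x‖ ^ 2) := by
  obtain rfl : f = expSum Finset.univ c ω := funext hf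
  obtain ⟨x₀, hx₀, hsup, hmax⟩ := isCompact_Icc.exists_sSup_image_eq_and_ge
    (nonempty_Icc.2 zero_le_one) (continuous_expSum _ c ω).norm.continuousOn
  rw [hsup]
  refine ⟨sqrt_integral_sq_le_of_norm_le (norm_nonneg _) hmax, ?_⟩
  have hsq := sq_norm_le_mul_integral_of_norm_deriv_le (hasDerivAt_expSum _ c ω)
    (fun t ht => by simpa using norm_expSum_deriv_le _ (fun k _ => hω k) hmax ht) hx₀
  set C := (2 * (1 + Ω)) ^ (M * (M + 1) / 2)
  have hC : max (2 * bernsteinConst Ω M) 1 ≤ C ^ 2 := by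
    rw [← pow_mul, Nat.div_mul_cancel (Nat.even_mul_succ_self M).two_dvd]
    exact max_le (two_mul_bernsteinConst_le hΩ M) (one_le_pow₀ (by linarith))
  have hI : 0 ≤ ∫ t in (0 : ℝ)..1, ‖expSum Finset.univ c ω t‖ ^ 2 :=
    intervalIntegral.integral_nonneg zero_le_one fun _ _ => by positivity
  calc ‖expSum Finset.univ c ω x₀‖ = √(‖expSum Finset.univ c ω x₀‖ ^ 2) :=
        (Real.sqrt_sq (norm_nonneg _)).symm
    _ ≤ √((2 * C) ^ 2 * ∫ t in (0 : ℝ)..1, ‖expSum Finset.univ c ω t‖ ^ 2) :=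
        Real.sqrt_le_sqrt (hsq.trans (by nlinarith))
    _ = 2 * C * √(∫ t in (0 : ℝ)..1, ‖expSum Finset.univ c ω t‖ ^ 2) := by
        rw [Real.sqrt_mul (by positivity), Real.sqrt_sq (by positivity)]
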